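/- arXiv:1604.08896 — 2 statements merged into one kernel-verified Lean document; each statement's English description precedes it below -/
import Mathlib

section
/- With G = M ⋊ C as above, if m ∈ (1 - α)M and (m_1,...,m_{n-1}, m·a) generates G, then (m_1,...,m_{n-1}) generates M as an R-module. -/
/-- The action of `C` on `M` by additive automorphisms, packaged as a homomorphism
`C →* MulAut (Multiplicative M)`, used to form the semidirect product `M ⋊ C`. -/
def sdAction (C M : Type*) [Group C] [AddCommGroup M] [DistribMulAction C M] :
    C →* MulAut (Multiplicative M) where
  toFun c := AddEquiv.toMultiplicative (DistribMulAction.toAddAut C M c)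
  map_one' := by ext x; simp
  map_mul' c c' := by ext x; simp [mul_smul]

open Pointwise

/-!
Let `N` be the `ℤ[C]`-submodule spanned by the `m i`. Since `N` is `C`-stable, the elements of
`M ⋊ C` whose `M`-component lies in `N` form a subgroup `N ⋊ C`. Writing `m' = x - a • x`,
conjugation by `-x ∈ M` fixes every `m i` (as `M` is abelian) and sends `m'·a` to `a`, so it maps
the generating set into `N ⋊ C`. Hence `N ⋊ C` is everything, and `N = M`.
-/

theorem Submodule.smul_mem_span_of_smul_subset {R M α : Type*} [Semiring R] [AddCommMonoid M]
    [Module R M] [Monoid α] [DistribMulAction α M] [SMulCommClass α R M] {s : Set M} {a : α}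
    (hs : a • s ⊆ s) {x : M} (hx : x ∈ Submodule.span R s) : a • x ∈ Submodule.span R s :=
  Submodule.span_mono hs
    (Submodule.span_smul (R := R) a s ▸ Submodule.smul_mem_pointwise_smul x a _ hx)

theorem Submodule.smul_mem_span_range_smul {R M α ι : Type*} [Semiring R] [AddCommMonoid M]
    [Module R M] [Monoid α] [DistribMulAction α M] [SMulCommClass α R M] (v : ι → M) (a : α)
    {x : M} (hx : x ∈ Submodule.span R (Set.range fun p : α × ι => p.1 • v p.2)) :
    a • x ∈ Submodule.span R (Set.range fun p : α × ι => p.1 • v p.2) := by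
  refine Submodule.smul_mem_span_of_smul_subset ?_ hx
  rintro _ ⟨_, ⟨p, rfl⟩, rfl⟩
  exact ⟨(a * p.1, p.2), mul_smul a p.1 (v p.2)⟩

theorem Subgroup.eq_top_of_closure_eq_top_of_surjective {G G' : Type*} [Group G] [Group G']
    {f : G →* G'} (hf : Function.Surjective f) {s : Set G} (hs : Subgroup.closure s = ⊤)
    {H : Subgroup G'} (hsH : ∀ x ∈ s, f x ∈ H) : H = ⊤ := by
  refine eq_top_iff.mpr ?_
  calc ⊤ = (Subgroup.closure s).map f := by rw [hs, Subgroup.map_top_of_surjective f hf]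
    _ ≤ H := Subgroup.map_le_iff_le_comap.mpr ((Subgroup.closure_le _).mpr hsH)

namespace SemidirectProduct

variable {N G : Type*} [Group N] [Group G] {φ : G →* MulAut N}

def subgroupLeft (K : Subgroup N) (hK : ∀ g, ∀ n ∈ K, φ g n ∈ K) : Subgroup (N ⋊[φ] G) where
  carrier := {x | x.left ∈ K}
  one_mem' := K.one_mem
  mul_mem' hx hy := K.mul_mem hx (hK _ _ hy)
  inv_mem' hx := hK _ _ (K.inv_mem hx)

theorem mem_subgroupLeft {K : Subgroup N} {hK : ∀ g, ∀ n ∈ K, φ g n ∈ K} {x : N ⋊[φ] G} :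
    x ∈ subgroupLeft K hK ↔ x.left ∈ K := Iff.rfl

theorem subgroupLeft_eq_top_iff {K : Subgroup N} {hK : ∀ g, ∀ n ∈ K, φ g n ∈ K} :
    subgroupLeft K hK = ⊤ ↔ K = ⊤ := by
  refine ⟨fun h => eq_top_iff.mpr fun n _ => ?_, fun h => eq_top_iff.mpr fun x _ => ?_⟩
  · exact mem_subgroupLeft.mp (h ▸ Subgroup.mem_top (inl n : N ⋊[φ] G))
  · exact mem_subgroupLeft.mpr (h ▸ Subgroup.mem_top x.left)

theorem inl_mul_mul_inl_inv (n : N) (x : N ⋊[φ] G) :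
    inl n * x * (inl n)⁻¹ = ⟨n * x.left * φ x.right n⁻¹, x.right⟩ := by
  ext <;> simp [map_inv]

end SemidirectProduct

theorem sdAction_inl_mul_mul_inl_inv {C M : Type*} [Group C] [AddCommGroup M]
    [DistribMulAction C M] (x y : M) (c : C) :
    SemidirectProduct.inl (Multiplicative.ofAdd (-x)) * ⟨Multiplicative.ofAdd y, c⟩ *
        (SemidirectProduct.inl (Multiplicative.ofAdd (-x)))⁻¹ =
      (⟨Multiplicative.ofAdd (y - (x - c • x)), c⟩ : Multiplicative M ⋊[sdAction C M] C) := by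
  rw [SemidirectProduct.inl_mul_mul_inl_inv]
  congr 1
  change Multiplicative.ofAdd (-x + y + c • - -x) = _
  rw [neg_neg]
  abel_nf

theorem stmt_11_general {C M : Type*} [Group C] [AddCommGroup M] [DistribMulAction C M]
    (a : C)
    (n : ℕ) (m : Fin n → M) (m' : M)
    (hm' : ∃ x : M, m' = x - a • x)
    (hgen : Subgroup.closure
        ((Set.range fun i : Fin n =>
            (⟨Multiplicative.ofAdd (m i), 1⟩ : Multiplicative M ⋊[sdAction C M] C)) ∪
          {(⟨Multiplicative.ofAdd m', a⟩ : Multiplicative M ⋊[sdAction C M] C)}) = ⊤) :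
    Submodule.span ℤ (Set.range fun p : C × Fin n => p.1 • m p.2) = ⊤ := by
  obtain ⟨x, rfl⟩ := hm'
  set N := Submodule.span ℤ (Set.range fun p : C × Fin n => p.1 • m p.2)
  let conj := MulAut.conj (SemidirectProduct.inl (φ := sdAction C M) (Multiplicative.ofAdd (-x)))
  have hNC : SemidirectProduct.subgroupLeft (φ := sdAction C M) N.toAddSubgroup.toSubgroup
      (fun c _ hy => Submodule.smul_mem_span_range_smul m c hy) = ⊤ := by
    refine Subgroup.eq_top_of_closure_eq_top_of_surjective
      (f := conj.toMonoidHom) conj.surjective hgen ?_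
    rintro _ (⟨i, rfl⟩ | rfl) <;>
      rw [MulEquiv.coe_toMonoidHom, MulAut.conj_apply, sdAction_inl_mul_mul_inl_inv] <;>
      change _ ∈ N
    · rw [one_smul, sub_self, sub_zero]
      exact Submodule.subset_span ⟨(1, i), one_smul C (m i)⟩
    · rw [sub_self]
      exact N.zero_mem
  exact Submodule.toAddSubgroup_eq_top.mp
    ((map_eq_top_iff AddSubgroup.toSubgroup).mp (SemidirectProduct.subgroupLeft_eq_top_iff.mp hNC))

/-- If `m' ∈ (1 - α)M` and `(m_1, …, m_n, m'·a)` generates `G = M ⋊ C`, then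
`(m_1, …, m_n)` generates `M` as an `R = ℤ[C]/ann(M)`-module. -/
theorem stmt_11 {C M : Type*} [Group C] [AddCommGroup M] [DistribMulAction C M]
    (a : C) (hC : ∀ c : C, c ∈ Subgroup.zpowers a)
    (n : ℕ) (m : Fin n → M) (m' : M)
    (hm' : ∃ x : M, m' = x - a • x)
    (hgen : Subgroup.closure
        ((Set.range fun i : Fin n =>
            (⟨Multiplicative.ofAdd (m i), 1⟩ : Multiplicative M ⋊[sdAction C M] C)) ∪
          {(⟨Multiplicative.ofAdd m', a⟩ : Multiplicative M ⋊[sdAction C M] C)}) = ⊤) :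
    Submodule.span ℤ (Set.range fun p : C × Fin n => p.1 • m p.2) = ⊤ :=
  stmt_11_general a n m m' hm' hgen
end

section
/- Let G = R ⋊_α C where ν(G) is nilpotent in R. A pair (g, g') ∈ G² generates G if and only if (σ(g), σ(g')) generates C and D_a(g,g') is a unit of R/ν(G)R. -/
/-- `∂_α(k)`: the Fox derivative `∂_α(k) = 1 + α + ⋯ + α^(k-1)` for `k ≥ 0`,
and `∂_α(k) = -α⁻¹·∂_{α⁻¹}(-k)` for `k < 0`. -/
def delta {R : Type*} [CommRing R] (α : Rˣ) : ℤ → R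
  | (k : ℕ) => ∑ i ∈ Finset.range k, (α : R) ^ i
  | (Int.negSucc k) => -((α⁻¹ : Rˣ) : R) * ∑ i ∈ Finset.range (k + 1), ((α⁻¹ : Rˣ) : R) ^ i

abbrev SemidirectByUnits {R C : Type*} [CommRing R] [Group C] (χ : C →* Rˣ) :=
  Multiplicative R ⋊[(sdAction Rˣ R).comp χ] C

namespace SemidirectByUnits

variable {R C : Type*} [CommRing R] [Group C] {χ : C →* Rˣ}

lemma mk_mul_mk (s t : R) (c d : C) :
    (⟨.ofAdd s, c⟩ * ⟨.ofAdd t, d⟩ : SemidirectByUnits χ) = ⟨.ofAdd (s + χ c * t), c * d⟩ :=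
  rfl

lemma inv_mk (s : R) (c : C) :
    (⟨.ofAdd s, c⟩ : SemidirectByUnits χ)⁻¹ = ⟨.ofAdd (χ c⁻¹ * -s), c⁻¹⟩ :=
  rfl

lemma mk_pow (s : R) (c : C) (n : ℕ) :
    (⟨.ofAdd s, c⟩ : SemidirectByUnits χ) ^ n = ⟨.ofAdd (delta (χ c) n * s), c ^ n⟩ := by
  induction n with
  | zero => ext <;> simp [delta]
  | succ n ih =>
    rw [pow_succ', ih, mk_mul_mk, pow_succ']
    simp only [delta, geom_sum_succ]
    ring_nf

lemma mk_zpow (s : R) (c : C) (m : ℤ) :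
    (⟨.ofAdd s, c⟩ : SemidirectByUnits χ) ^ m = ⟨.ofAdd (delta (χ c) m * s), c ^ m⟩ := by
  cases m with
  | ofNat n => simpa only [Int.ofNat_eq_natCast, zpow_natCast] using mk_pow s c n
  | negSucc n =>
    rw [zpow_negSucc, ← inv_pow, inv_mk, mk_pow, zpow_negSucc, inv_pow, map_inv]
    simp only [delta]
    ring_nf

end SemidirectByUnits

open SemidirectByUnits

section delta

variable {R : Type*} [CommRing R]

lemma delta_zero (α : Rˣ) : delta α 0 = 0 := rfl

lemma delta_one (α : Rˣ) : delta α 1 = 1 := by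
  simp [delta]

-- The cocycle identity, read off from `zpow_add` for the powers of `⟨1, α⟩` in `R ⋊ Rˣ`.
lemma delta_add (α : Rˣ) (m n : ℤ) : delta α (m + n) = delta α m + (α ^ m : Rˣ) * delta α n := by
  have h := zpow_add (⟨.ofAdd 1, α⟩ : SemidirectByUnits (MonoidHom.id Rˣ)) m n
  rw [mk_zpow, mk_zpow, mk_zpow, mk_mul_mk] at h
  simpa using congrArg (fun x => x.left.toAdd) h

lemma one_sub_mul_delta (α : Rˣ) (m : ℤ) : (1 - α : R) * delta α m = 1 - (α ^ m : Rˣ) := by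
  have h := delta_add α 1 m
  rw [add_comm, delta_add, delta_one, zpow_one] at h
  linear_combination h

lemma delta_one_left (m : ℤ) : delta (1 : Rˣ) m = m := by
  cases m with
  | ofNat n => simp [delta]
  | negSucc n => simp [delta, Int.negSucc_eq]

lemma map_delta {S : Type*} [CommRing S] (f : R →+* S) (α : Rˣ) (m : ℤ) :
    f (delta α m) = delta (Units.map f α) m := by
  cases m <;> simp [delta, ← map_inv]

end delta

lemma Commute.exists_zpow_mul_zpow_eq {G : Type*} [Group G] {x y z : G} (hxy : Commute x y)
    (hz : z ∈ Subgroup.closure {x, y}) : ∃ m n : ℤ, x ^ m * y ^ n = z := by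
  induction hz using Subgroup.closure_induction with
  | mem z hz =>
    rcases hz with rfl | rfl
    · exact ⟨1, 0, by simp⟩
    · exact ⟨0, 1, by simp⟩
  | one => exact ⟨0, 0, by simp⟩
  | mul z w _ _ ihz ihw =>
    obtain ⟨m, n, rfl⟩ := ihz
    obtain ⟨m', n', rfl⟩ := ihw
    refine ⟨m + m', n + n', ?_⟩
    rw [zpow_add, zpow_add, mul_assoc, mul_assoc, ← mul_assoc (y ^ n), ← (hxy.zpow_zpow m' n).eq,
      mul_assoc]
  | inv z _ ih =>
    obtain ⟨m, n, rfl⟩ := ih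
    refine ⟨-m, -n, ?_⟩
    rw [mul_inv_rev, zpow_neg, zpow_neg, ((hxy.zpow_zpow m n).inv_inv).eq]

lemma Commute.of_closure_pair_eq_top {G : Type*} [Group G] {x y : G} (hxy : Commute x y)
    (h : Subgroup.closure {x, y} = ⊤) (z w : G) : Commute z w := by
  have hle := Subgroup.closure_le_centralizer_centralizer ({x, y} : Set G)
  rw [h] at hle
  refine Set.centralizer_centralizer_comm_of_comm ?_ z (hle trivial) w (hle trivial)
  rintro _ (rfl | rfl) _ (rfl | rfl)
  exacts [rfl, hxy.eq, hxy.symm.eq, rfl]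

lemma Ideal.isNilpotent_span_singleton {R : Type*} [CommRing R] {x : R} (hx : IsNilpotent x) :
    IsNilpotent (Ideal.span {x}) := by
  obtain ⟨n, hn⟩ := hx
  exact ⟨n, by rw [Ideal.span_singleton_pow, hn, Ideal.span_singleton_eq_bot.mpr rfl]; rfl⟩

lemma intCast_eq_zero_of_zpow_eq_one {R C : Type*} [Ring R] [Group C] {a : C}
    (hC : ∀ c : C, c ∈ Subgroup.zpowers a) (hcard : (Nat.card C : R) = 0) {w : ℤ}
    (hw : a ^ w = 1) : (w : R) = 0 := by
  obtain ⟨m, rfl⟩ := orderOf_dvd_iff_zpow_eq_one.mpr hw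
  rw [orderOf_eq_card_of_forall_mem_zpowers hC]
  push_cast
  rw [hcard, zero_mul]

lemma natCard_eq_zero_of_map_finsum_eq_zero {R S C : Type*} [CommRing R] [CommRing S] [Group C]
    {χ : C →* Rˣ} (f : R →+* S) (hχ : ∀ c, f (χ c) = 1) (hν : f (∑ᶠ c : C, (χ c : R)) = 0) :
    (Nat.card C : S) = 0 := by
  cases finite_or_infinite C
  · have := Fintype.ofFinite C
    rw [finsum_eq_sum_of_fintype, map_sum] at hν
    simpa [hχ] using hν
  · rw [Nat.card_eq_zero_of_infinite, Nat.cast_zero]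

namespace SemidirectByUnits

variable {R S C : Type*} [CommRing R] [CommRing S] [Group C] {χ : C →* Rˣ}

lemma map_rightHom_closure_pair (s t : R) (c d : C) :
    (Subgroup.closure {(⟨.ofAdd s, c⟩ : SemidirectByUnits χ), ⟨.ofAdd t, d⟩}).map
      SemidirectProduct.rightHom = Subgroup.closure {c, d} := by
  rw [MonoidHom.map_closure, Set.image_pair]
  rfl

lemma commute_mk_zpow (a : C) (r r' : R) (k k' : ℤ)
    (hD : r * delta (χ a) k' - r' * delta (χ a) k = 0) :
    Commute (⟨.ofAdd r, a ^ k⟩ : SemidirectByUnits χ) ⟨.ofAdd r', a ^ k'⟩ := by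
  show _ * _ = _ * _
  rw [mk_mul_mk, mk_mul_mk, ← zpow_add, ← zpow_add, add_comm k, map_zpow, map_zpow]
  congr 2
  linear_combination (1 - (χ a : R)) * hD - r * one_sub_mul_delta (χ a) k' +
    r' * one_sub_mul_delta (χ a) k

lemma eq_one_of_closure_pair_eq_top {x y : SemidirectByUnits χ} (hxy : Commute x y)
    (h : Subgroup.closure {x, y} = ⊤) (c : C) : χ c = 1 := by
  have hc := (hxy.of_closure_pair_eq_top h ⟨.ofAdd 0, c⟩ ⟨.ofAdd 1, 1⟩).eq
  rw [mk_mul_mk, mk_mul_mk, map_one, Units.val_one, mul_one, mul_zero, mul_one, zero_add,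
    add_zero, one_mul] at hc
  exact Units.ext (Multiplicative.ofAdd.injective (congrArg SemidirectProduct.left hc))

def mapRingHom (f : R →+* S) :
    SemidirectByUnits χ →* SemidirectByUnits ((Units.map (f : R →* S)).comp χ) :=
  SemidirectProduct.map f.toAddMonoidHom.toMultiplicative (MonoidHom.id C) fun c => by
    ext x
    exact map_mul f (χ c : R) x

lemma mapRingHom_surjective {f : R →+* S} (hf : Function.Surjective f) :
    Function.Surjective (mapRingHom (χ := χ) f) := by
  rintro ⟨t, c⟩
  obtain ⟨s, hs⟩ := hf t.toAdd
  exact ⟨⟨.ofAdd s, c⟩, SemidirectProduct.ext (congrArg Multiplicative.ofAdd hs) rfl⟩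

lemma one_eq_zero_of_closure_eq_top_of_forall_eq_one {a : C} (hC : ∀ c : C, c ∈ Subgroup.zpowers a)
    (hχ : ∀ c, χ c = 1) (hcard : (Nat.card C : R) = 0) {r r' : R} {k k' : ℤ}
    (hD : r * k' - r' * k = 0)
    (h : Subgroup.closure {(⟨.ofAdd r, a ^ k⟩ : SemidirectByUnits χ), ⟨.ofAdd r', a ^ k'⟩} = ⊤) :
    (1 : R) = 0 := by
  have hzpow (s : R) (c : C) (m : ℤ) :
      (⟨.ofAdd s, c⟩ : SemidirectByUnits χ) ^ m = ⟨.ofAdd (m * s), c ^ m⟩ := by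
    rw [mk_zpow, hχ, delta_one_left]
  have hcomm : Commute (⟨.ofAdd r, a ^ k⟩ : SemidirectByUnits χ) ⟨.ofAdd r', a ^ k'⟩ := by
    show _ * _ = _ * _
    rw [mk_mul_mk, mk_mul_mk, hχ, hχ, Units.val_one, one_mul, one_mul, ← zpow_add, ← zpow_add,
      add_comm k, add_comm r]
  have hgen (z : SemidirectByUnits χ) := hcomm.exists_zpow_mul_zpow_eq (h ▸ Subgroup.mem_top z)
  -- `⟨1, 1⟩ = g ^ u * g' ^ v` and `⟨0, a⟩ = g ^ u' * g' ^ v'`: the matrix `[[r, r'], [k, k']]` is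
  -- invertible over `R`, yet its determinant is `0`.
  obtain ⟨u, v, h₁⟩ := hgen ⟨.ofAdd 1, 1⟩
  obtain ⟨u', v', h₂⟩ := hgen ⟨.ofAdd 0, a⟩
  rw [hzpow, hzpow, mk_mul_mk, hχ, Units.val_one, one_mul, SemidirectProduct.ext_iff] at h₁ h₂
  obtain ⟨h₁l, h₁r⟩ := h₁
  obtain ⟨h₂l, h₂r⟩ := h₂
  replace h₁l := Multiplicative.ofAdd.injective h₁l
  replace h₂l := Multiplicative.ofAdd.injective h₂l
  have h₁c : ((k * u + k' * v : ℤ) : R) = 0 := intCast_eq_zero_of_zpow_eq_one hC hcard (by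
    rwa [zpow_add, zpow_mul, zpow_mul])
  have h₂c : ((k * u' + k' * v' - 1 : ℤ) : R) = 0 := intCast_eq_zero_of_zpow_eq_one hC hcard (by
    rw [zpow_sub, zpow_add, zpow_mul, zpow_mul, zpow_one]; exact mul_inv_eq_one.mpr h₂r)
  push_cast at h₁c h₂c
  linear_combination (u * v' - v * u') * hD - (u' * k + v' * k') * h₁l - h₂c +
    (u * k + v * k') * h₂l

lemma one_eq_zero_of_closure_eq_top {f : R →+* S} (hf : Function.Surjective f) {a : C}
    (hC : ∀ c : C, c ∈ Subgroup.zpowers a) (hν : f (∑ᶠ c : C, (χ c : R)) = 0) {r r' : R}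
    {k k' : ℤ} (hD : f (r * delta (χ a) k' - r' * delta (χ a) k) = 0)
    (h : Subgroup.closure {(⟨.ofAdd r, a ^ k⟩ : SemidirectByUnits χ), ⟨.ofAdd r', a ^ k'⟩} = ⊤) :
    (1 : S) = 0 := by
  set χS := (Units.map (f : R →* S)).comp χ
  have hS : Subgroup.closure
      {(⟨.ofAdd (f r), a ^ k⟩ : SemidirectByUnits χS), ⟨.ofAdd (f r'), a ^ k'⟩} = ⊤ := by
    rw [← Subgroup.map_top_of_surjective _ (mapRingHom_surjective hf), ← h,
      MonoidHom.map_closure, Set.image_pair]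
    rfl
  have hDS : f r * delta (χS a) k' - f r' * delta (χS a) k = 0 := by
    rwa [map_sub, map_mul, map_mul, map_delta, map_delta] at hD
  have hχ := eq_one_of_closure_pair_eq_top (commute_mk_zpow a _ _ k k' hDS) hS
  refine one_eq_zero_of_closure_eq_top_of_forall_eq_one hC hχ ?_ ?_ hS
  · exact natCard_eq_zero_of_map_finsum_eq_zero f (fun c => congrArg Units.val (hχ c)) hν
  · rwa [hχ, delta_one_left, delta_one_left] at hDS

lemma isUnit_mk_of_closure_eq_top {a : C} (hC : ∀ c : C, c ∈ Subgroup.zpowers a) {r r' : R}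
    {k k' : ℤ}
    (h : Subgroup.closure {(⟨.ofAdd r, a ^ k⟩ : SemidirectByUnits χ), ⟨.ofAdd r', a ^ k'⟩} = ⊤) :
    IsUnit (Ideal.Quotient.mk (Ideal.span {∑ᶠ c : C, (χ c : R)})
      (r * delta (χ a) k' - r' * delta (χ a) k)) := by
  set q := Ideal.Quotient.mk (Ideal.span {∑ᶠ c : C, (χ c : R)})
  set J := Ideal.span {q (r * delta (χ a) k' - r' * delta (χ a) k)}
  rw [← Ideal.span_singleton_eq_top, ← Ideal.Quotient.subsingleton_iff,
    ← subsingleton_iff_zero_eq_one]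
  refine (one_eq_zero_of_closure_eq_top (f := (Ideal.Quotient.mk J).comp q)
    ((Ideal.Quotient.mk_surjective).comp Ideal.Quotient.mk_surjective) hC ?_ ?_ h).symm
  · simp [q]
  · exact Ideal.Quotient.eq_zero_iff_mem.mpr (Ideal.mem_span_singleton_self _)

def leftAddSubgroup (H : Subgroup (SemidirectByUnits χ)) : AddSubgroup R where
  carrier := {t | (⟨.ofAdd t, 1⟩ : SemidirectByUnits χ) ∈ H}
  add_mem' {s t} hs ht := by
    have := H.mul_mem hs ht
    rwa [mk_mul_mk, map_one, Units.val_one, one_mul, mul_one] at this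
  zero_mem' := H.one_mem
  neg_mem' {t} ht := by
    have := H.inv_mem ht
    rwa [inv_mk, inv_one, map_one, Units.val_one, one_mul] at this

lemma mem_leftAddSubgroup {H : Subgroup (SemidirectByUnits χ)} {t : R} :
    t ∈ leftAddSubgroup H ↔ (⟨.ofAdd t, 1⟩ : SemidirectByUnits χ) ∈ H :=
  Iff.rfl

lemma exists_mk_mem_of_map_rightHom_eq_top {H : Subgroup (SemidirectByUnits χ)}
    (hH : H.map SemidirectProduct.rightHom = ⊤) (c : C) :
    ∃ s : R, (⟨.ofAdd s, c⟩ : SemidirectByUnits χ) ∈ H := by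
  obtain ⟨x, hx, rfl⟩ := hH ▸ Subgroup.mem_top c
  exact ⟨x.left.toAdd, hx⟩

lemma eq_top_of_leftAddSubgroup_eq_top {H : Subgroup (SemidirectByUnits χ)}
    (hH : H.map SemidirectProduct.rightHom = ⊤) (hI : leftAddSubgroup H = ⊤) : H = ⊤ := by
  rw [Subgroup.eq_top_iff']
  rintro ⟨l, c⟩
  obtain ⟨s, hs⟩ := exists_mk_mem_of_map_rightHom_eq_top hH c
  have hl : l.toAdd - s ∈ leftAddSubgroup H := hI ▸ AddSubgroup.mem_top _
  have := H.mul_mem hl hs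
  rwa [mk_mul_mk, map_one, Units.val_one, one_mul, one_mul, sub_add_cancel] at this

-- Conjugation by an element of `H` over `c` multiplies `leftAddSubgroup H` by `χ c`, and the
-- `χ c` generate `R` as a ring.
lemma mul_mem_leftAddSubgroup (hR : Subring.closure (Set.range fun c : C => (χ c : R)) = ⊤)
    {H : Subgroup (SemidirectByUnits χ)} (hH : H.map SemidirectProduct.rightHom = ⊤) (w : R)
    {t : R} (ht : t ∈ leftAddSubgroup H) : w * t ∈ leftAddSubgroup H := by
  have hconj (c : C) {t : R} (ht : t ∈ leftAddSubgroup H) : (χ c : R) * t ∈ leftAddSubgroup H := by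
    obtain ⟨s, hs⟩ := exists_mk_mem_of_map_rightHom_eq_top hH c
    have := H.mul_mem (H.mul_mem hs ht) (H.inv_mem hs)
    rw [inv_mk, mk_mul_mk, mk_mul_mk, mul_one, mul_inv_cancel, map_inv,
      Units.mul_inv_cancel_left] at this
    rwa [mem_leftAddSubgroup, ← add_neg_cancel_comm s ((χ c : R) * t)]
  have hw : w ∈ Subring.closure (Set.range fun c : C => (χ c : R)) := hR ▸ Subring.mem_top w
  induction hw using Subring.closure_induction generalizing t with
  | mem x hx =>
    obtain ⟨c, rfl⟩ := hx
    exact hconj c ht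
  | zero => simpa only [zero_mul] using (leftAddSubgroup H).zero_mem
  | one => simpa only [one_mul] using ht
  | add x y _ _ hx hy => simpa only [add_mul] using add_mem (hx ht) (hy ht)
  | neg x _ hx => simpa only [neg_mul] using neg_mem (hx ht)
  | mul x y _ _ hx hy => simpa only [mul_assoc] using hx (hy ht)

lemma sub_delta_mul_mem_leftAddSubgroup {H : Subgroup (SemidirectByUnits χ)} {a : C} {s x : R}
    (hs : ⟨.ofAdd s, a⟩ ∈ H) {m : ℤ} (hx : ⟨.ofAdd x, a ^ m⟩ ∈ H) :
    x - delta (χ a) m * s ∈ leftAddSubgroup H := by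
  have := H.mul_mem hx (H.zpow_mem hs (-m))
  rw [mk_zpow, mk_mul_mk, ← zpow_add, add_neg_cancel, zpow_zero] at this
  have hδ := delta_add (χ a) m (-m)
  rw [add_neg_cancel, delta_zero] at hδ
  rw [mem_leftAddSubgroup]
  convert this using 4
  rw [map_zpow]
  linear_combination s * hδ

lemma closure_eq_top_of_isUnit (hR : Subring.closure (Set.range fun c : C => (χ c : R)) = ⊤)
    {a : C} {r r' : R} {k k' : ℤ} (hgen : Subgroup.closure ({a ^ k, a ^ k'} : Set C) = ⊤)
    (hD : IsUnit (r * delta (χ a) k' - r' * delta (χ a) k)) :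
    Subgroup.closure {(⟨.ofAdd r, a ^ k⟩ : SemidirectByUnits χ), ⟨.ofAdd r', a ^ k'⟩} = ⊤ := by
  set H := Subgroup.closure {(⟨.ofAdd r, a ^ k⟩ : SemidirectByUnits χ), ⟨.ofAdd r', a ^ k'⟩}
  have hH : H.map SemidirectProduct.rightHom = ⊤ := by rw [map_rightHom_closure_pair, hgen]
  obtain ⟨s, hs⟩ := exists_mk_mem_of_map_rightHom_eq_top hH a
  have hg := sub_delta_mul_mem_leftAddSubgroup hs (Subgroup.subset_closure (.inl rfl))
  have hg' := sub_delta_mul_mem_leftAddSubgroup hs (Subgroup.subset_closure (.inr rfl))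
  have hDmem : r * delta (χ a) k' - r' * delta (χ a) k ∈ leftAddSubgroup H := by
    convert sub_mem (mul_mem_leftAddSubgroup hR hH (delta (χ a) k') hg)
      (mul_mem_leftAddSubgroup hR hH (delta (χ a) k) hg') using 1
    ring
  refine eq_top_of_leftAddSubgroup_eq_top hH ((AddSubgroup.eq_top_iff' _).mpr fun t => ?_)
  obtain ⟨u, hu⟩ := hD
  simpa [← hu] using mul_mem_leftAddSubgroup hR hH (t * u⁻¹ : R) hDmem

end SemidirectByUnits

/-- In `G = R ⋊_α C` with `C = ⟨a⟩` cyclic acting on `R` via `χ : C →* Rˣ`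
(`α = χ a`), assume the norm element `ν = ∑ᶠ c : C, χ c` is nilpotent. A pair
`(g, g') = (r·a^k, r'·a^{k'})` generates `G` if and only if `(a^k, a^{k'})`
generates `C` and `D_a(g,g')` is a unit of `R/νR`. -/
theorem stmt_15 {R C : Type*} [CommRing R] [Group C]
    (a : C) (hC : ∀ c : C, c ∈ Subgroup.zpowers a)
    (χ : C →* Rˣ)
    (hR : Subring.closure (Set.range fun c : C => ((χ c : R))) = ⊤)
    (hnil : IsNilpotent (∑ᶠ c : C, ((χ c : R))))
    (r r' : R) (k k' : ℤ)
    (g g' : Multiplicative R ⋊[(sdAction Rˣ R).comp χ] C)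
    (hg : g = ⟨Multiplicative.ofAdd r, a ^ k⟩)
    (hg' : g' = ⟨Multiplicative.ofAdd r', a ^ k'⟩) :
    Subgroup.closure {g, g'} = ⊤ ↔
      Subgroup.closure ({a ^ k, a ^ k'} : Set C) = ⊤ ∧
        IsUnit (Ideal.Quotient.mk (Ideal.span {∑ᶠ c : C, ((χ c : R))})
          (r * delta (χ a) k' - r' * delta (χ a) k)) := by
  subst hg hg'
  have hν := Ideal.isNilpotent_span_singleton hnil
  refine ⟨fun h => ⟨?_, isUnit_mk_of_closure_eq_top hC h⟩, fun ⟨hgen, hD⟩ =>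
    closure_eq_top_of_isUnit hR hgen (hν.isUnit_quotient_mk_iff.mp hD)⟩
  rw [← map_rightHom_closure_pair (χ := χ) r r', h, ← MonoidHom.range_eq_map]
  exact MonoidHom.range_eq_top_of_surjective _ SemidirectProduct.rightHom_surjective
end
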